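/- arXiv:dg-ga/9710029 — 6 statements merged into one kernel-verified Lean document; each statement's English description precedes it below -/
import Mathlib

section
/- Define polynomials R_r^1, R_r^2, R_r^3 in ℂ[α,β,γ] by R_0^1 = 1, R_0^2 = 0, R_0^3 = 0, and for r ≥ 0: R_{r+1}^1 = α·R_r^1 + r²·R_r^2, R_{r+1}^2 = (β + (−1)^{r+1}·8)·R_r^1 + (2r/(r+1))·R_r^3, R_{r+1}^3 = γ·R_r^1. Let J_g be the ideal (R_g^1, R_g^2, R_g^3). Then for all g ≥ 1, γ·J_g ⊆ J_{g+1}. -/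
open MvPolynomial

noncomputable section

abbrev R3 : Type := MvPolynomial (Fin 3) ℂ

def al : R3 := X 0
def be : R3 := X 1
def ga : R3 := X 2

def Rrel : ℕ → R3 × R3 × R3
  | 0 => (1, 0, 0)
  | (r + 1) =>
    let p := Rrel r
    (al * p.1 + (r : R3) ^ 2 * p.2.1,
     (be + (-1) ^ (r + 1) * 8) * p.1 + C ((2 * (r : ℂ)) / ((r : ℂ) + 1)) * p.2.2,
     ga * p.1)

def J (g : ℕ) : Ideal R3 := Ideal.span {(Rrel g).1, (Rrel g).2.1, (Rrel g).2.2}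

/-! Writing `(a, b, c) = Rrel g`, the generators of `J (g + 1)` are `α a + g² b`, `(β ± 8) a + c_g c`
and `γ a`, with `g²` and `c_g = 2g/(g+1)` nonzero scalars for `g ≥ 1`. Hence `γ a` lies in `J (g + 1)`
outright, and `γ b`, `γ c` are obtained from `γ` times the first two generators by subtracting
multiples of `γ a` and dividing by the scalar. -/

theorem Ideal.mul_mem_of_mem_span {R : Type*} [CommRing R] {s : Set R} {I : Ideal R} {t : R}
    (h : ∀ y ∈ s, t * y ∈ I) {x : R} (hx : x ∈ Ideal.span s) : t * x ∈ I := by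
  have hle : Ideal.span s ≤ I.colon {t} := Ideal.span_le.mpr fun y hy ↦
    Submodule.mem_colon_singleton.mpr (by simpa only [smul_eq_mul, mul_comm y t] using h y hy)
  simpa only [smul_eq_mul, mul_comm x t] using Submodule.mem_colon_singleton.mp (hle hx)

theorem mul_mem_span_step {R : Type*} [CommRing R] (α δ γ a b c : R) (u v : Rˣ) {x : R}
    (hx : x ∈ Ideal.span {a, b, c}) :
    γ * x ∈ Ideal.span {α * a + u * b, δ * a + v * c, γ * a} := by
  set I := Ideal.span {α * a + u * b, δ * a + v * c, γ * a}
  have hA : α * a + u * b ∈ I := Ideal.subset_span (by simp)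
  have hB : δ * a + v * c ∈ I := Ideal.subset_span (by simp)
  have hC : γ * a ∈ I := Ideal.subset_span (by simp)
  have hb : γ * b = ↑u⁻¹ * (γ * (α * a + u * b) - α * (γ * a)) := by
    rw [Units.eq_inv_mul_iff_mul_eq]; ring
  have hc : γ * c = ↑v⁻¹ * (γ * (δ * a + v * c) - δ * (γ * a)) := by
    rw [Units.eq_inv_mul_iff_mul_eq]; ring
  have hCb : γ * b ∈ I :=
    hb ▸ I.mul_mem_left _ (I.sub_mem (I.mul_mem_left _ hA) (I.mul_mem_left _ hC))
  have hCc : γ * c ∈ I :=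
    hc ▸ I.mul_mem_left _ (I.sub_mem (I.mul_mem_left _ hB) (I.mul_mem_left _ hC))
  refine Ideal.mul_mem_of_mem_span (fun y hy ↦ ?_) hx
  simp only [Set.mem_insert_iff, Set.mem_singleton_iff] at hy
  rcases hy with rfl | rfl | rfl <;> assumption

theorem stmt2 (g : ℕ) (hg : 1 ≤ g) : ∀ x ∈ J g, ga * x ∈ J (g + 1) := by
  have hg0 : (g : ℂ) ≠ 0 := Nat.cast_ne_zero.mpr (by omega)
  have hu : IsUnit ((g : R3) ^ 2) := by
    rw [← map_natCast C, ← map_pow]; exact (isUnit_iff_ne_zero.mpr (pow_ne_zero 2 hg0)).map C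
  have hv : IsUnit (C ((2 * (g : ℂ)) / ((g : ℂ) + 1)) : R3) :=
    (isUnit_iff_ne_zero.mpr
      (div_ne_zero (mul_ne_zero two_ne_zero hg0) (Nat.cast_add_one_ne_zero g))).map C
  intro x hx
  exact mul_mem_span_step al _ ga _ _ _ hu.unit hv.unit hx
end
end

section
/- With the relations R_r^i defined recursively as above (R_0^1 = 1, R_0^2 = 0, R_0^3 = 0; R_{r+1}^1 = α·R_r^1 + r²·R_r^2, R_{r+1}^2 = (β + (−1)^{r+1}·8)·R_r^1 + (2r/(r+1))·R_r^3, R_{r+1}^3 = γ·R_r^1), one has γ^g ∈ J_g for every g ≥ 1, where J_g = (R_g^1, R_g^2, R_g^3). Consequently γ is nilpotent in the quotient ring ℂ[α,β,γ]/J_g. -/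
/-! The key fact is `γ · J_r ⊆ J_{r+1}`. Since `J_0` is the unit ideal, iterating it `g` times
puts `γ^g` in `J_g`. -/

open MvPolynomial

noncomputable section

lemma Rrel_succ_snd_snd (r : ℕ) : (Rrel (r + 1)).2.2 = ga * (Rrel r).1 := rfl

lemma Rrel_succ_fst (r : ℕ) :
    (Rrel (r + 1)).1 = al * (Rrel r).1 + C ((r : ℂ) ^ 2) * (Rrel r).2.1 := by
  rw [map_pow, map_natCast]
  rfl

lemma Rrel_succ_snd_fst (r : ℕ) :
    (Rrel (r + 1)).2.1 = (be + (-1) ^ (r + 1) * 8) * (Rrel r).1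
      + C ((2 * (r : ℂ)) / ((r : ℂ) + 1)) * (Rrel r).2.2 := rfl

lemma fst_mem_J (g : ℕ) : (Rrel g).1 ∈ J g := Ideal.subset_span (by simp)

lemma snd_fst_mem_J (g : ℕ) : (Rrel g).2.1 ∈ J g := Ideal.subset_span (by simp)

lemma snd_snd_mem_J (g : ℕ) : (Rrel g).2.2 ∈ J g := Ideal.subset_span (by simp)

lemma mem_of_C_mul_mem {σ K : Type*} [Field K] {I : Ideal (MvPolynomial σ K)} {c : K}
    (hc : c ≠ 0) {x : MvPolynomial σ K} (h : C c * x ∈ I) : x ∈ I :=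
  (Ideal.unit_mul_mem_iff_mem I ((IsUnit.mk0 c hc).map C)).1 h

/-- Multiplying the recursion for `R_{r+1}^1` (resp. `R_{r+1}^2`) by `γ` and using
`γ R_r^1 = R_{r+1}^3` isolates `r² γ R_r^2` (resp. `2r/(r+1) γ R_r^3`) in `J (r + 1)`;
for `r = 0` those coefficients vanish, but so do `R_0^2` and `R_0^3`. -/
lemma ga_mul_Rrel_mem_J_succ (r : ℕ) :
    ga * (Rrel r).1 ∈ J (r + 1) ∧ ga * (Rrel r).2.1 ∈ J (r + 1) ∧
      ga * (Rrel r).2.2 ∈ J (r + 1) := by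
  have hfst : ga * (Rrel r).1 ∈ J (r + 1) := Rrel_succ_snd_snd r ▸ snd_snd_mem_J (r + 1)
  rcases eq_or_ne r 0 with rfl | hr
  · simpa [Rrel] using hfst
  have hr' : (r : ℂ) ≠ 0 := Nat.cast_ne_zero.2 hr
  refine ⟨hfst, mem_of_C_mul_mem (pow_ne_zero 2 hr') ?_,
    mem_of_C_mul_mem (div_ne_zero (mul_ne_zero two_ne_zero hr') (Nat.cast_add_one_ne_zero r)) ?_⟩
  · have h : C ((r : ℂ) ^ 2) * (ga * (Rrel r).2.1) =
        ga * (Rrel (r + 1)).1 - al * (ga * (Rrel r).1) := by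
      rw [Rrel_succ_fst]; ring
    rw [h]
    exact sub_mem (Ideal.mul_mem_left _ _ (fst_mem_J _)) (Ideal.mul_mem_left _ _ hfst)
  · have h : C ((2 * (r : ℂ)) / ((r : ℂ) + 1)) * (ga * (Rrel r).2.2) =
        ga * (Rrel (r + 1)).2.1 - (be + (-1) ^ (r + 1) * 8) * (ga * (Rrel r).1) := by
      rw [Rrel_succ_snd_fst]; ring
    rw [h]
    exact sub_mem (Ideal.mul_mem_left _ _ (snd_fst_mem_J _)) (Ideal.mul_mem_left _ _ hfst)

lemma ga_mul_mem_J_succ {r : ℕ} {p : R3} (hp : p ∈ J r) : ga * p ∈ J (r + 1) := by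
  induction hp using Submodule.span_induction with
  | mem x hx =>
    obtain ⟨h1, h2, h3⟩ := ga_mul_Rrel_mem_J_succ r
    rcases hx with rfl | rfl | rfl
    exacts [h1, h2, h3]
  | zero => simp
  | add x y _ _ hx hy => rw [mul_add]; exact add_mem hx hy
  | smul a x _ hx => rw [smul_eq_mul, mul_left_comm]; exact Ideal.mul_mem_left _ a hx

lemma ga_pow_mul_mem_J_add {r : ℕ} {p : R3} (hp : p ∈ J r) (k : ℕ) :
    ga ^ k * p ∈ J (r + k) := by
  induction k with
  | zero => simpa using hp
  | succ k ih => simpa [pow_succ', mul_assoc, ← add_assoc] using ga_mul_mem_J_succ ih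

lemma ga_pow_mem_J (g : ℕ) : ga ^ g ∈ J g := by
  simpa [Rrel] using ga_pow_mul_mem_J_add (fst_mem_J 0) g

theorem stmt4_general (g : ℕ) :
    ga ^ g ∈ J g ∧ IsNilpotent (Ideal.Quotient.mk (J g) ga) :=
  ⟨ga_pow_mem_J g, g, by rw [← map_pow, Ideal.Quotient.eq_zero_iff_mem]; exact ga_pow_mem_J g⟩

theorem stmt4 (g : ℕ) (hg : 1 ≤ g) :
    ga ^ g ∈ J g ∧ IsNilpotent (Ideal.Quotient.mk (J g) ga) :=
  stmt4_general g
end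
end

section
/- Let ẑ_r ∈ ℂ[α] be defined by ẑ_0 = 1, ẑ_1 = α, ẑ_{r+1} = α·ẑ_r + r²·(8 + (−1)^r·8)·ẑ_{r−1}. Then the set of common roots in ℂ of ẑ_g and ẑ_{g+1} is exactly {0} ∪ {±8k·√−1 : 1 ≤ k ≤ ⌊(g−1)/2⌋}. -/
/-! The recurrence splits by parity: `ẑ_{2m+2} = α ẑ_{2m+1}` because the coefficient `8 + (-1)^r 8`
vanishes for odd `r`, and then `ẑ_{2m+3} = (α² + 64 (m+1)²) ẑ_{2m+1}`. Hence
`ẑ_{2m+1} = α ∏_{k=1}^{m} (α² + (8k)²)`, whose roots are `0` and `±8k√−1`, `1 ≤ k ≤ m`.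
For `g ≥ 1` the common roots of `ẑ_g` and `ẑ_{g+1}` are exactly the roots of `ẑ_{2⌊(g-1)/2⌋+1}`:
for odd `g` the next polynomial is a multiple, and for even `g` the two extra factors
`α` and `α² + (8(m+1))²` have no common root. -/

open Polynomial

noncomputable section

def zhat : ℕ → Polynomial ℂ
  | 0 => 1
  | 1 => Polynomial.X
  | (r + 2) => Polynomial.X * zhat (r + 1)
      + ((r : Polynomial ℂ) + 1) ^ 2 * (8 + (-1) ^ (r + 1) * 8) * zhat r

theorem Complex.sq_add_sq_eq_zero_iff (z c : ℂ) :
    z ^ 2 + c ^ 2 = 0 ↔ z = c * I ∨ z = -(c * I) := by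
  have hfactor : z ^ 2 + c ^ 2 = (z - c * I) * (z + c * I) := by
    linear_combination c ^ 2 * I_sq
  rw [hfactor, mul_eq_zero, sub_eq_zero, add_eq_zero_iff_eq_neg]

lemma zhat_two_mul_add_two (m : ℕ) : zhat (2 * m + 2) = X * zhat (2 * m + 1) := by
  rw [zhat, Odd.neg_one_pow ⟨m, rfl⟩]
  ring

lemma zhat_two_mul_add_three (m : ℕ) :
    zhat (2 * m + 3) = (X ^ 2 + C ((8 * ((m : ℂ) + 1)) ^ 2)) * zhat (2 * m + 1) := by
  rw [zhat, zhat_two_mul_add_two, Even.neg_one_pow ⟨m + 1, by ring⟩]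
  simp only [map_pow, map_mul, map_add, map_natCast, map_one, C_ofNat]
  push_cast
  ring

lemma zhat_two_mul_add_one (m : ℕ) :
    zhat (2 * m + 1) = X * ∏ k ∈ Finset.Icc 1 m, (X ^ 2 + C ((8 * (k : ℂ)) ^ 2)) := by
  induction m with
  | zero => simp [zhat]
  | succ m ih =>
    rw [Finset.prod_Icc_succ_top (by omega), ← mul_assoc, ← ih,
      show 2 * (m + 1) + 1 = 2 * m + 3 from rfl, zhat_two_mul_add_three]
    push_cast
    ring

lemma eval_zhat_two_mul_add_one_eq_zero_iff (m : ℕ) (z : ℂ) :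
    (zhat (2 * m + 1)).eval z = 0 ↔
      z = 0 ∨ ∃ k : ℕ, 1 ≤ k ∧ k ≤ m ∧
        (z = 8 * (k : ℂ) * Complex.I ∨ z = -(8 * (k : ℂ) * Complex.I)) := by
  simp only [zhat_two_mul_add_one, eval_mul, eval_X, eval_prod, eval_add, eval_pow, eval_C,
    mul_eq_zero, Finset.prod_eq_zero_iff, Finset.mem_Icc, Complex.sq_add_sq_eq_zero_iff]
  simp only [and_assoc]

lemma eval_zhat_eq_zero_and_succ_iff {g : ℕ} (hg : 1 ≤ g) (z : ℂ) :
    (zhat g).eval z = 0 ∧ (zhat (g + 1)).eval z = 0 ↔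
      (zhat (2 * ((g - 1) / 2) + 1)).eval z = 0 := by
  obtain ⟨m, rfl | rfl⟩ : ∃ m, g = 2 * m + 1 ∨ g = 2 * m + 2 := ⟨(g - 1) / 2, by omega⟩
  · rw [show (2 * m + 1 - 1) / 2 = m by omega, zhat_two_mul_add_two, eval_mul]
    exact and_iff_left_of_imp fun h ↦ by rw [h, mul_zero]
  · rw [show (2 * m + 2 - 1) / 2 = m by omega, zhat_two_mul_add_two, zhat_two_mul_add_three,
      eval_mul, eval_mul]
    refine ⟨fun ⟨h₁, h₂⟩ ↦ ?_, fun h ↦ by simp [h]⟩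
    by_contra hne
    obtain rfl : z = 0 := by simpa [hne] using h₁
    simp only [eval_add, eval_pow, eval_X, eval_C, mul_eq_zero, hne, or_false] at h₂
    norm_num at h₂
    exact Nat.cast_add_one_ne_zero m h₂

theorem stmt7 (g : ℕ) (hg : 1 ≤ g) :
    {z : ℂ | (zhat g).eval z = 0 ∧ (zhat (g + 1)).eval z = 0} =
      {0} ∪ {z : ℂ | ∃ k : ℕ, 1 ≤ k ∧ k ≤ (g - 1) / 2 ∧
        (z = 8 * (k : ℂ) * Complex.I ∨ z = -(8 * (k : ℂ) * Complex.I))} := by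
  ext z
  rw [Set.mem_ofPred_eq, eval_zhat_eq_zero_and_succ_iff hg, eval_zhat_two_mul_add_one_eq_zero_iff]
  rfl
end
end

section
/- Let V be a finite-dimensional ℂ-vector space that is a module over ℂ[α,β,γ]/J_{g+1} (J as defined by the standard recursion), and suppose v ∈ V is a nonzero vector satisfying γ·v = 0, β·v = (−1)^g·8·v, and α·v = 4g·v if g is odd (resp. α·v = 4g·i·v if g is even). Then, for the relations R_r^i defined recursively with R_0^1 = 1, R_0^2 = 0, R_0^3 = 0, one has R_{g−1}^1·v = λ·v for some nonzero scalar λ ∈ ℂ, R_g^1·v = α·R_{g−1}^1·v, R_g^2·v = (−1)^g·16·R_{g−1}^1·v, and R_g^3·v = 0, assuming inductively that the recursion coefficients satisfy c_r = (−1)^r·8 and d_r = 0 for all r ≤ g. -/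
open MvPolynomial

noncomputable section

/-! Since `v` is a common eigenvector of `al`, `be`, `ga` with eigenvalues `(a, b, 0)`, every
element of `R3` acts on `v` through evaluation at that point. For `b = (-1)^g 8` the coefficient
`b + (-1)^(r+1) 8` vanishes when `r ≡ g (mod 2)` and equals `(-1)^g 16` otherwise, so for `r + g`
odd, `R_{r+2}^1 = (a^2 + (-1)^g 16 (r+1)^2) R_r^1 = (-1)^g 16 ((r+1)^2 - g^2) R_r^1`, using
`a^2 = -(-1)^g 16 g^2`. Starting from `R_0^1 = 1` or `R_1^1 = a`, the value of `R_{g-1}^1` is a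
product of nonzero factors. -/

theorem neg_one_pow_eq_neg_of_odd_add {R : Type*} [Monoid R] [HasDistribNeg R] {m n : ℕ}
    (h : Odd (m + n)) : (-1 : R) ^ m = -(-1) ^ n := by
  rw [← neg_one_mul ((-1 : R) ^ n), ← pow_succ']
  exact neg_one_pow_congr (by grind)

theorem MvPolynomial.smul_eq_eval_smul {σ R V : Type*} [CommSemiring R] [AddCommMonoid V]
    [Module R V] [Module (MvPolynomial σ R) V] [IsScalarTower R (MvPolynomial σ R) V]
    (x : σ → R) {v : V} (hv : ∀ i, (X i : MvPolynomial σ R) • v = x i • v)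
    (p : MvPolynomial σ R) : p • v = eval x p • v := by
  induction p using MvPolynomial.induction_on with
  | C c => rw [eval_C, ← algebraMap_eq, algebraMap_smul]
  | add p q hp hq => rw [add_smul, hp, hq, map_add, add_smul]
  | mul_X p i hp =>
    rw [mul_comm, mul_smul, hp, smul_comm, hv, smul_smul, map_mul, eval_X, mul_comm]

section Recursion

variable (a b : ℂ) (r : ℕ)

theorem eval_Rrel_snd_snd : eval ![a, b, 0] (Rrel r).2.2 = 0 := by
  cases r <;> simp [Rrel, ga]

theorem eval_Rrel_succ_fst :
    eval ![a, b, 0] (Rrel (r + 1)).1 =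
      a * eval ![a, b, 0] (Rrel r).1 + r ^ 2 * eval ![a, b, 0] (Rrel r).2.1 := by
  simp [Rrel, al]

theorem eval_Rrel_succ_snd_fst :
    eval ![a, b, 0] (Rrel (r + 1)).2.1 = (b + (-1) ^ (r + 1) * 8) * eval ![a, b, 0] (Rrel r).1 := by
  simp [Rrel, be, eval_Rrel_snd_snd]

end Recursion

section Eigenvalues

variable {g : ℕ} {a : ℂ} {r : ℕ}

theorem eval_Rrel_snd_fst_eq_zero (hr : Odd (r + g)) :
    eval ![a, (-1) ^ g * 8, 0] (Rrel r).2.1 = 0 := by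
  cases r with
  | zero => simp [Rrel]
  | succ r =>
    rw [eval_Rrel_succ_snd_fst, neg_one_pow_eq_neg_of_odd_add hr]
    ring

theorem eval_Rrel_add_two_fst (ha : a ^ 2 = -(-1) ^ g * 16 * g ^ 2) (hr : Odd (r + g)) :
    eval ![a, (-1) ^ g * 8, 0] (Rrel (r + 2)).1 =
      (-1) ^ g * 16 * ((r + 1) ^ 2 - g ^ 2) * eval ![a, (-1) ^ g * 8, 0] (Rrel r).1 := by
  rw [eval_Rrel_succ_fst, eval_Rrel_succ_fst, eval_Rrel_snd_fst_eq_zero hr,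
    eval_Rrel_succ_snd_fst, neg_one_pow_congr (R := ℂ) (m := r + 1) (n := g) (by grind)]
  push_cast
  linear_combination eval ![a, (-1) ^ g * 8, 0] (Rrel r).1 * ha

theorem eval_Rrel_fst_ne_zero (ha : a ^ 2 = -(-1) ^ g * 16 * g ^ 2) (hr : Odd (r + g))
    (hrg : r < g) : eval ![a, (-1) ^ g * 8, 0] (Rrel r).1 ≠ 0 := by
  induction r using Nat.twoStepInduction with
  | zero => simp [Rrel]
  | one =>
    have hg : (g : ℂ) ≠ 0 := by exact_mod_cast hrg.ne_bot
    have ha0 : a ≠ 0 := ne_of_apply_ne (· ^ 2) (by simp [ha, hg])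
    simpa [eval_Rrel_succ_fst, Rrel, al] using ha0
  | more n ih _ =>
    rw [eval_Rrel_add_two_fst ha (by grind)]
    have hlt : (n + 1) ^ 2 < g ^ 2 := Nat.pow_lt_pow_left (by omega) two_ne_zero
    refine mul_ne_zero (mul_ne_zero (by simp) (sub_ne_zero.2 ?_)) (ih (by grind) (by omega))
    exact_mod_cast hlt.ne

end Eigenvalues

theorem stmt15_general (g : ℕ) (hg : 1 ≤ g)
    {V : Type} [AddCommGroup V] [Module ℂ V] [Module R3 V] [IsScalarTower ℂ R3 V]
    (v : V)
    (h1 : ga • v = 0)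
    (h2 : be • v = ((-1 : ℂ) ^ g * 8) • v)
    (h3 : Odd g → al • v = ((4 * g : ℂ)) • v)
    (h4 : Even g → al • v = ((4 * g : ℂ) * Complex.I) • v) :
    (∃ l : ℂ, l ≠ 0 ∧ (Rrel (g - 1)).1 • v = l • v) ∧
    (Rrel g).1 • v = (al * (Rrel (g - 1)).1) • v ∧
    (Rrel g).2.1 • v = (((-1 : ℂ) ^ g * 16) • (Rrel (g - 1)).1) • v ∧
    (Rrel g).2.2 • v = 0 := by
  obtain ⟨a, ha, hsq⟩ : ∃ a : ℂ, al • v = a • v ∧ a ^ 2 = -(-1) ^ g * 16 * g ^ 2 := by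
    rcases Nat.even_or_odd g with hpar | hpar
    · refine ⟨_, h4 hpar, ?_⟩
      rw [hpar.neg_one_pow]
      linear_combination 16 * (g : ℂ) ^ 2 * Complex.I_sq
    · exact ⟨_, h3 hpar, by rw [hpar.neg_one_pow]; ring⟩
  have hact (p : R3) : p • v = eval ![a, (-1) ^ g * 8, 0] p • v := by
    refine MvPolynomial.smul_eq_eval_smul _ (fun i => ?_) p
    fin_cases i
    exacts [ha, h2, h1.trans (zero_smul ℂ v).symm]
  obtain ⟨m, rfl⟩ : ∃ m, g = m + 1 := ⟨g - 1, by omega⟩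
  have hm : Odd (m + (m + 1)) := ⟨m, by ring⟩
  rw [Nat.add_sub_cancel]
  refine ⟨⟨_, eval_Rrel_fst_ne_zero hsq hm (by omega), hact _⟩, ?_, ?_, ?_⟩
  · rw [hact, hact, map_mul, eval_Rrel_succ_fst, eval_Rrel_snd_fst_eq_zero hm]
    simp [al]
  · rw [hact, smul_assoc, hact, smul_smul, eval_Rrel_succ_snd_fst]
    congr 1
    ring
  · rw [hact, eval_Rrel_snd_snd, zero_smul]

theorem stmt15 (g : ℕ) (hg : 1 ≤ g)
    {V : Type} [AddCommGroup V] [Module ℂ V] [Module R3 V] [IsScalarTower ℂ R3 V]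
    [FiniteDimensional ℂ V]
    (hmod : ∀ x ∈ J (g + 1), ∀ v : V, x • v = 0)
    (v : V) (hv : v ≠ 0)
    (h1 : ga • v = 0)
    (h2 : be • v = ((-1 : ℂ) ^ g * 8) • v)
    (h3 : Odd g → al • v = ((4 * g : ℂ)) • v)
    (h4 : Even g → al • v = ((4 * g : ℂ) * Complex.I) • v) :
    (∃ l : ℂ, l ≠ 0 ∧ (Rrel (g - 1)).1 • v = l • v) ∧
    (Rrel g).1 • v = (al * (Rrel (g - 1)).1) • v ∧
    (Rrel g).2.1 • v = (((-1 : ℂ) ^ g * 16) • (Rrel (g - 1)).1) • v ∧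
    (Rrel g).2.2 • v = 0 :=
  stmt15_general g hg v h1 h2 h3 h4
end
end

section
/- Let J_g ⊂ ℂ[α,β,γ] be the recursively defined relations ideal (with R_0^1 = 1, etc.). The eigenvalues of multiplication by the triple (α, β, γ) on ℂ[α,β,γ]/J_g (i.e., the points of the zero locus V(J_g) ⊂ ℂ³) are exactly the 2g−1 points of the common zero set of J_g in ℂ³, namely { (λ_j, μ_j, 0) : j = −(g−1), …, g−1 }, where for j odd λ_j = 4j and μ_j = −8, and for j even λ_j = 4j·i and μ_j = 8. -/
open MvPolynomial

noncomputable section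

/-! ### Auxiliary lemmas -/

lemma mulz {X Y : ℂ} (hX : X ≠ 0) (h : X * Y = 0) : Y = 0 := by
  rcases mul_eq_zero.mp h with h' | h'
  · exact absurd h' hX
  · exact h'

lemma natc_succ_ne (r : ℕ) : ((r:ℂ)+1) ≠ 0 := by
  have := (Nat.cast_ne_zero (R := ℂ)).mpr (Nat.succ_ne_zero r)
  push_cast at this; exact this

lemma ev0a (x : Fin 3 → ℂ) : eval x (Rrel 0).1 = 1 := by simp [Rrel]
lemma ev0b (x : Fin 3 → ℂ) : eval x (Rrel 0).2.1 = 0 := by simp [Rrel]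
lemma ev0c (x : Fin 3 → ℂ) : eval x (Rrel 0).2.2 = 0 := by simp [Rrel]

lemma ev1 (x : Fin 3 → ℂ) (r : ℕ) :
    eval x (Rrel (r+1)).1 = x 0 * eval x (Rrel r).1 + (r:ℂ)^2 * eval x (Rrel r).2.1 := by
  simp [Rrel, al]

lemma ev2 (x : Fin 3 → ℂ) (r : ℕ) :
    eval x (Rrel (r+1)).2.1
      = (x 1 + (-1)^(r+1) * 8) * eval x (Rrel r).1
        + (2*(r:ℂ)/((r:ℂ)+1)) * eval x (Rrel r).2.2 := by
  simp [Rrel, be]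

lemma ev3 (x : Fin 3 → ℂ) (r : ℕ) :
    eval x (Rrel (r+1)).2.2 = x 2 * eval x (Rrel r).1 := by
  simp [Rrel, ga]

lemma mem_J_iff (g : ℕ) (x : Fin 3 → ℂ) :
    (∀ f ∈ J g, eval x f = 0) ↔
      (eval x (Rrel g).1 = 0 ∧ eval x (Rrel g).2.1 = 0 ∧ eval x (Rrel g).2.2 = 0) := by
  constructor
  · intro h
    refine ⟨h _ ?_, h _ ?_, h _ ?_⟩ <;>
      exact Ideal.subset_span (by simp)
  · rintro ⟨h1, h2, h3⟩ f hf
    have : J g ≤ RingHom.ker (eval x) := by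
      rw [J, Ideal.span_le]
      rintro f hf
      simp only [Set.mem_insert_iff, Set.mem_singleton_iff] at hf
      rcases hf with rfl | rfl | rfl <;> simpa [RingHom.mem_ker]
    exact this hf

def FF (a : ℂ) (m : ℕ) : ℂ := ∏ k ∈ Finset.range m, (a^2 + 64*((k:ℂ)+1)^2)
def GG (a : ℂ) (m : ℕ) : ℂ := ∏ k ∈ Finset.range m, (a^2 - 16*(2*(k:ℂ)+1)^2)

lemma FF_succ (a : ℂ) (m : ℕ) : FF a (m+1) = FF a m * (a^2 + 64*((m:ℂ)+1)^2) :=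
  Finset.prod_range_succ _ _
lemma GG_succ (a : ℂ) (m : ℕ) : GG a (m+1) = GG a m * (a^2 - 16*(2*(m:ℂ)+1)^2) :=
  Finset.prod_range_succ _ _

section rec
variable (a b : ℂ) (u : ℕ → ℂ)
variable (h0 : u 0 = 1) (h1 : u 1 = a)
variable (hrec : ∀ r : ℕ, u (r+2) = a * u (r+1) + ((r:ℂ)+1)^2 * (b + (-1)^(r+1)*8) * u r)

include h1 hrec in
lemma cf8 (hb : b = 8) : ∀ m : ℕ, u (2*m+1) = a * FF a m ∧ u (2*m+2) = a^2 * FF a m := by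
  subst hb
  intro m
  induction m with
  | zero =>
    constructor
    · simpa [FF] using h1
    · have := hrec 0
      simp at this
      rw [this, h1]
      simp [FF]; ring
  | succ m ih =>
    have e1 : u (2*(m+1)+1) = a * FF a (m+1) := by
      have h := hrec (2*m+1)
      have hp : ((-1:ℂ))^(2*m+1+1) = 1 := by
        rw [show 2*m+1+1 = 2*(m+1) by ring, pow_mul]; simp
      rw [show 2*m+1+2 = 2*(m+1)+1 by ring, show 2*m+1+1 = 2*m+2 by ring] at h
      rw [h, hp, ih.2, ih.1, FF_succ]
      push_cast
      ring
    refine ⟨e1, ?_⟩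
    have h := hrec (2*(m+1))
    have hp : ((-1:ℂ))^(2*(m+1)+1) = -1 := by
      rw [pow_succ, pow_mul]; simp
    rw [h, hp, e1, show 2*(m+1) = 2*m+2 by ring, ih.2]
    push_cast
    ring

include h0 h1 hrec in
lemma cfm8 (hb : b = -8) : ∀ m : ℕ, u (2*m) = GG a m ∧ u (2*m+1) = a * GG a m := by
  subst hb
  intro m
  induction m with
  | zero =>
    refine ⟨by simpa [GG] using h0, by simpa [GG] using h1⟩
  | succ m ih =>
    have e1 : u (2*(m+1)) = GG a (m+1) := by
      have h := hrec (2*m)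
      have hp : ((-1:ℂ))^(2*m+1) = -1 := by rw [pow_succ, pow_mul]; simp
      rw [show 2*m+2 = 2*(m+1) by ring] at h
      rw [h, hp, ih.1, ih.2, GG_succ]
      push_cast
      ring
    refine ⟨e1, ?_⟩
    have hp : ((-1:ℂ))^(2*m+1+1) = 1 := by
      rw [show 2*m+1+1 = 2*(m+1) by ring, pow_mul]; simp
    have h := hrec (2*m+1)
    rw [hp] at h
    rw [show 2*(m+1)+1 = 2*m+1+2 by ring, h, show 2*m+1+1 = 2*(m+1) by ring, e1]
    ring

include h0 hrec in
lemma no_two_consec (hb1 : b ≠ 8) (hb2 : b ≠ -8) :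
    ∀ r : ℕ, ¬(u r = 0 ∧ u (r+1) = 0) := by
  have hcoef : ∀ r : ℕ, (b + (-1:ℂ)^(r+1)*8) ≠ 0 := by
    intro r
    rcases Nat.even_or_odd (r+1) with he | ho
    · rw [he.neg_one_pow]
      intro h; apply hb2; linear_combination h
    · rw [ho.neg_one_pow]
      intro h; apply hb1; linear_combination h
  intro r
  induction r with
  | zero => rintro ⟨hz, -⟩; rw [h0] at hz; exact one_ne_zero hz
  | succ r ih =>
    rintro ⟨ha1, ha2⟩
    apply ih
    refine ⟨?_, ha1⟩
    have h := hrec r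
    rw [ha1, ha2] at h
    have h' : ((r:ℂ)+1)^2 * (b + (-1)^(r+1)*8) * u r = 0 := by linear_combination -h
    rcases mul_eq_zero.mp h' with h'' | h''
    · exfalso
      rcases mul_eq_zero.mp h'' with h3 | h3
      · exact (pow_ne_zero 2 (natc_succ_ne r)) h3
      · exact hcoef r h3
    · exact h''
end rec

lemma coef_ne {b : ℂ} (hb1 : b ≠ 8) (hb2 : b ≠ -8) (r : ℕ) : b + (-1:ℂ)^(r+1)*8 ≠ 0 := by
  rcases Nat.even_or_odd (r+1) with he | ho
  · rw [he.neg_one_pow]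
    intro h; apply hb2; linear_combination h
  · rw [ho.neg_one_pow]
    intro h; apply hb1; linear_combination h

lemma descentA (a b c : ℂ) (hc : c ≠ 0) (u w t : ℕ → ℂ) (h0 : u 0 = 1)
    (hu : ∀ r : ℕ, u (r+1) = a * u r + (r:ℂ)^2 * w r)
    (hw : ∀ r : ℕ, w (r+1) = (b + (-1)^(r+1)*8) * u r + (2*(r:ℂ)/((r:ℂ)+1)) * t r)
    (ht : ∀ r : ℕ, t (r+1) = c * u r) :
    ∀ k : ℕ, ¬(u (k+1) = 0 ∧ u (k+2) = 0 ∧ w (k+2) = 0) := by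
  have hstep : ∀ k : ℕ, u (k+1) = 0 → w (k+2) = 0 → u k = 0 := by
    intro k hk1 hk2
    have h5 := hw (k+1)
    rw [hk1, hk2] at h5
    have ht1 : t (k+1) = 0 := by
      have hco : (2*(((k:ℕ)+1:ℕ):ℂ)/((((k:ℕ)+1:ℕ):ℂ)+1)) ≠ 0 := by
        push_cast
        exact div_ne_zero (mul_ne_zero two_ne_zero (natc_succ_ne k))
          (by have := natc_succ_ne (k+1); push_cast at this; exact this)
      apply mulz hco
      linear_combination -h5
    have h7 := ht k
    rw [ht1] at h7
    exact mulz hc h7.symm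
  intro k
  induction k with
  | zero =>
    rintro ⟨hk1, -, hk3⟩
    have := hstep 0 hk1 hk3
    rw [h0] at this
    exact one_ne_zero this
  | succ k ih =>
    rintro ⟨hk1, hk2, hk3⟩
    apply ih
    have hu1 : u (k+1) = 0 := hstep (k+1) hk1 hk3
    refine ⟨hu1, hk1, ?_⟩
    have hk1' : u (k+2) = 0 := by rwa [show k+1+1 = k+2 by omega] at hk1
    have hk2' : u (k+3) = 0 := by rwa [show k+1+2 = k+3 by omega] at hk2
    have h4 := hu (k+2)
    rw [show k+2+1 = k+3 by omega] at h4
    rw [hk2', hk1'] at h4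
    have h5 : ((k:ℂ)+2)^2 * w (k+2) = 0 := by push_cast at h4; linear_combination -h4
    exact mulz (pow_ne_zero 2 (by
      intro h; apply natc_succ_ne (k+1); push_cast; linear_combination h)) h5

lemma aFF_eq_zero (a : ℂ) (m : ℕ) :
    a * FF a m = 0 ↔ ∃ j : ℤ, Even j ∧ |j| ≤ 2*(m:ℤ) ∧ a = 4*(j:ℂ)*Complex.I := by
  constructor
  · intro h
    rcases mul_eq_zero.mp h with rfl | hF
    · exact ⟨0, Even.zero, by simp, by simp⟩
    · rw [FF, Finset.prod_eq_zero_iff] at hF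
      obtain ⟨k, hk, hk0⟩ := hF
      rw [Finset.mem_range] at hk
      have hfac : (a - 8*((k:ℂ)+1)*Complex.I) * (a + 8*((k:ℂ)+1)*Complex.I) = 0 := by
        linear_combination hk0 - 64*((k:ℂ)+1)^2 * Complex.I_sq
      rcases mul_eq_zero.mp hfac with h' | h'
      · refine ⟨2*((k:ℤ)+1), even_two_mul _, ?_, ?_⟩
        · rw [abs_of_nonneg (by positivity)]; omega
        · push_cast
          linear_combination h'
      · refine ⟨-(2*((k:ℤ)+1)), (even_two_mul _).neg, ?_, ?_⟩
        · rw [abs_neg, abs_of_nonneg (by positivity)]; omega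
        · push_cast
          linear_combination h'
  · rintro ⟨j, hje, hjle, rfl⟩
    rcases eq_or_ne j 0 with rfl | hj0
    · simp
    · apply mul_eq_zero.mpr; right
      rw [FF, Finset.prod_eq_zero_iff]
      have h2 : 2 ∣ j.natAbs := by rcases hje with ⟨t, rfl⟩; omega
      have h1 : 1 ≤ j.natAbs := by omega
      have h3 : (j.natAbs : ℤ) ≤ 2*(m:ℤ) := by rwa [Int.abs_eq_natAbs] at hjle
      refine ⟨j.natAbs/2 - 1, Finset.mem_range.mpr (by omega), ?_⟩
      have hkk : ((j.natAbs/2 - 1 : ℕ) : ℂ) + 1 = (j.natAbs : ℂ)/2 := by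
        have h22 : (j.natAbs/2 - 1 + 1) * 2 = j.natAbs := by omega
        field_simp
        exact_mod_cast h22
      rw [hkk]
      have hsq : ((j.natAbs : ℂ))^2 = ((j:ℂ))^2 := by
        rw [Nat.cast_natAbs]
        exact_mod_cast congrArg (fun z : ℤ => (z:ℂ)) (sq_abs j)
      linear_combination (16:ℂ)*(j:ℂ)^2*Complex.I_sq + 16*hsq

lemma GG_eq_zero (a : ℂ) (m : ℕ) :
    GG a m = 0 ↔ ∃ j : ℤ, Odd j ∧ |j| ≤ 2*(m:ℤ) - 1 ∧ a = 4*(j:ℂ) := by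
  constructor
  · intro hF
    rw [GG, Finset.prod_eq_zero_iff] at hF
    obtain ⟨k, hk, hk0⟩ := hF
    rw [Finset.mem_range] at hk
    have hfac : (a - 4*(2*(k:ℂ)+1)) * (a + 4*(2*(k:ℂ)+1)) = 0 := by
      linear_combination hk0
    rcases mul_eq_zero.mp hfac with h' | h'
    · refine ⟨2*(k:ℤ)+1, odd_two_mul_add_one _, ?_, ?_⟩
      · rw [abs_of_nonneg (by positivity)]; omega
      · push_cast; linear_combination h'
    · refine ⟨-(2*(k:ℤ)+1), (odd_two_mul_add_one _).neg, ?_, ?_⟩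
      · rw [abs_neg, abs_of_nonneg (by positivity)]; omega
      · push_cast; linear_combination h'
  · rintro ⟨j, hjo, hjle, rfl⟩
    rw [GG, Finset.prod_eq_zero_iff]
    have h1 : 1 ≤ j.natAbs := by
      rcases hjo with ⟨t, rfl⟩; omega
    have hodd : j.natAbs % 2 = 1 := by
      rcases hjo with ⟨t, rfl⟩; omega
    refine ⟨(j.natAbs - 1)/2, Finset.mem_range.mpr ?_, ?_⟩
    · have : (j.natAbs : ℤ) ≤ 2*(m:ℤ) - 1 := by
        rw [Int.abs_eq_natAbs] at hjle; exact_mod_cast hjle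
      omega
    · have hkk : 2*(((j.natAbs - 1)/2 : ℕ) : ℂ) + 1 = (j.natAbs : ℂ) := by
        have : 2*((j.natAbs - 1)/2) + 1 = j.natAbs := by omega
        rw [show 2*(((j.natAbs - 1)/2 : ℕ) : ℂ) + 1 = ((2*((j.natAbs-1)/2) + 1 : ℕ) : ℂ) by push_cast; ring, this]
      rw [hkk]
      have hsq : ((j.natAbs : ℂ))^2 = ((j:ℂ))^2 := by
        rw [Nat.cast_natAbs]
        exact_mod_cast congrArg (fun z : ℤ => (z:ℂ)) (sq_abs j)
      linear_combination (-16:ℂ)*hsq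

theorem stmt16 (g : ℕ) (hg : 1 ≤ g) :
    {x : Fin 3 → ℂ | ∀ f ∈ J g, MvPolynomial.eval x f = 0} =
      {x : Fin 3 → ℂ | ∃ j : ℤ, |j| ≤ (g : ℤ) - 1 ∧
        x = ![if Odd j then (4 * (j : ℂ)) else 4 * (j : ℂ) * Complex.I,
              if Odd j then (-8 : ℂ) else 8, 0]} := by
  obtain ⟨s, rfl⟩ : ∃ s, g = s + 1 := ⟨g - 1, by omega⟩
  ext x
  simp only [Set.mem_setOf_eq]
  rw [mem_J_iff]
  constructor
  · rintro ⟨h1, h2, h3⟩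
    -- Step 1 : x 2 = 0
    have hc : x 2 = 0 := by
      by_contra hc
      have hus : eval x (Rrel s).1 = 0 := by
        rw [ev3] at h3
        exact mulz hc h3
      cases s with
      | zero => rw [ev0a] at hus; exact one_ne_zero hus
      | succ k =>
        exact descentA (x 0) (x 1) (x 2) hc
          (fun r => eval x (Rrel r).1) (fun r => eval x (Rrel r).2.1)
          (fun r => eval x (Rrel r).2.2) (ev0a x) (ev1 x) (ev2 x) (ev3 x)
          k ⟨hus, h1, h2⟩
    -- derived recurrences with c = 0
    have ht0 : ∀ r : ℕ, eval x (Rrel r).2.2 = 0 := by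
      intro r
      cases r with
      | zero => exact ev0c x
      | succ r => rw [ev3, hc, zero_mul]
    have hww : ∀ r : ℕ, eval x (Rrel (r+1)).2.1
        = (x 1 + (-1)^(r+1)*8) * eval x (Rrel r).1 := by
      intro r; rw [ev2, ht0, mul_zero, add_zero]
    have hu1 : eval x (Rrel 1).1 = x 0 := by
      rw [show (1:ℕ) = 0 + 1 from rfl, ev1, ev0a, ev0b]
      simp
    have hurec : ∀ r : ℕ, eval x (Rrel (r+2)).1
        = x 0 * eval x (Rrel (r+1)).1
          + ((r:ℂ)+1)^2 * (x 1 + (-1)^(r+1)*8) * eval x (Rrel r).1 := by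
      intro r
      rw [show r+2 = (r+1)+1 from rfl, ev1, hww]
      push_cast
      ring
    -- Step 2 : x 1 = 8 ∨ x 1 = -8
    have hb : x 1 = 8 ∨ x 1 = -8 := by
      by_contra hb
      push_neg at hb
      have hus : eval x (Rrel s).1 = 0 := by
        rw [hww] at h2
        exact mulz (coef_ne hb.1 hb.2 s) h2
      exact no_two_consec (x 0) (x 1) (fun r => eval x (Rrel r).1) (ev0a x) hurec
        hb.1 hb.2 s ⟨hus, h1⟩
    rw [hww] at h2
    rcases hb with hb | hb
    · -- x 1 = 8, even j
      have hcf := cf8 (x 0) (x 1) (fun r => eval x (Rrel r).1) hu1 hurec hb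
      have hcf1 : ∀ m : ℕ, eval x (Rrel (2*m+1)).1 = x 0 * FF (x 0) m := fun m => (hcf m).1
      have key : ∃ m : ℕ, 2*(m:ℤ) ≤ (s:ℤ) ∧ x 0 * FF (x 0) m = 0 := by
        rcases Nat.even_or_odd (s+1) with hev | hod
        · obtain ⟨t, ht'⟩ := hev
          obtain ⟨m, hm⟩ : ∃ m, s + 1 = 2*m+2 := ⟨t - 1, by omega⟩
          obtain rfl : s = 2*m+1 := by omega
          refine ⟨m, by push_cast; omega, ?_⟩
          have hpar : ((-1:ℂ))^(2*m+1+1) = 1 := by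
            rw [show 2*m+1+1 = 2*(m+1) by ring, pow_mul]; simp
          rw [hpar, hb] at h2
          have h2' : eval x (Rrel (2*m+1)).1 = 0 :=
            mulz (show (8:ℂ) + 1*8 ≠ 0 by norm_num) h2
          rw [hcf1 m] at h2'
          exact h2'
        · obtain ⟨m, hm⟩ := hod
          obtain rfl : s = 2*m := by omega
          refine ⟨m, by push_cast; omega, ?_⟩
          rw [hcf1 m] at h1
          exact h1
      obtain ⟨m, hmle, hFF⟩ := key
      obtain ⟨j, hje, hjle, haj⟩ := (aFF_eq_zero (x 0) m).mp hFF
      refine ⟨j, by push_cast; omega, ?_⟩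
      have hoj : ¬ Odd j := Int.not_odd_iff_even.mpr hje
      funext i
      fin_cases i <;> simp [hoj, haj, hb, hc]
    · -- x 1 = -8, odd j
      have hcf := cfm8 (x 0) (x 1) (fun r => eval x (Rrel r).1) (ev0a x) hu1 hurec hb
      have hcf1 : ∀ m : ℕ, eval x (Rrel (2*m)).1 = GG (x 0) m := fun m => (hcf m).1
      have key : ∃ m : ℕ, 2*(m:ℤ) - 1 ≤ (s:ℤ) ∧ GG (x 0) m = 0 := by
        rcases Nat.even_or_odd (s+1) with hev | hod
        · obtain ⟨t, ht'⟩ := hev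
          obtain ⟨m, hm⟩ : ∃ m, s + 1 = 2*m+2 := ⟨t - 1, by omega⟩
          obtain rfl : s = 2*m+1 := by omega
          refine ⟨m+1, by push_cast; omega, ?_⟩
          rw [show (2*m+1+1 : ℕ) = 2*(m+1) by omega, hcf1 (m+1)] at h1
          exact h1
        · obtain ⟨m, hm⟩ := hod
          obtain rfl : s = 2*m := by omega
          refine ⟨m, by push_cast; omega, ?_⟩
          have hpar : ((-1:ℂ))^(2*m+1) = -1 := by
            rw [pow_succ, pow_mul]; simp
          rw [hpar, hb] at h2
          have h2' : eval x (Rrel (2*m)).1 = 0 :=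
            mulz (show (-8:ℂ) + (-1)*8 ≠ 0 by norm_num) h2
          rw [hcf1 m] at h2'
          exact h2'
      obtain ⟨m, hmle, hGG⟩ := key
      obtain ⟨j, hjo, hjle, haj⟩ := (GG_eq_zero (x 0) m).mp hGG
      refine ⟨j, by push_cast; omega, ?_⟩
      funext i
      fin_cases i <;> simp [hjo, haj, hb, hc]
  · rintro ⟨j, hjle, rfl⟩
    set A : ℂ := if Odd j then (4 * (j : ℂ)) else 4 * (j : ℂ) * Complex.I with hA
    set B : ℂ := if Odd j then (-8 : ℂ) else 8 with hB
    set x : Fin 3 → ℂ := ![A, B, 0] with hx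
    have hx0 : x 0 = A := by rw [hx]; simp
    have hx1 : x 1 = B := by rw [hx]; simp
    have hx2 : x 2 = 0 := by rw [hx]; simp
    have ht0 : ∀ r : ℕ, eval x (Rrel r).2.2 = 0 := by
      intro r
      cases r with
      | zero => exact ev0c x
      | succ r => rw [ev3, hx2, zero_mul]
    have hww : ∀ r : ℕ, eval x (Rrel (r+1)).2.1
        = (x 1 + (-1)^(r+1)*8) * eval x (Rrel r).1 := by
      intro r; rw [ev2, ht0, mul_zero, add_zero]
    have hu1 : eval x (Rrel 1).1 = x 0 := by
      rw [show (1:ℕ) = 0 + 1 from rfl, ev1, ev0a, ev0b]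
      simp
    have hurec : ∀ r : ℕ, eval x (Rrel (r+2)).1
        = x 0 * eval x (Rrel (r+1)).1
          + ((r:ℂ)+1)^2 * (x 1 + (-1)^(r+1)*8) * eval x (Rrel r).1 := by
      intro r
      rw [show r+2 = (r+1)+1 from rfl, ev1, hww]
      push_cast
      ring
    obtain ⟨hab1, hab2⟩ := abs_le.mp hjle
    by_cases hoj : Odd j
    · -- odd j : b = -8
      have hB' : x 1 = -8 := by rw [hx1, hB, if_pos hoj]
      have hA' : x 0 = 4*(j:ℂ) := by rw [hx0, hA, if_pos hoj]
      have hcf := cfm8 (x 0) (x 1) (fun r => eval x (Rrel r).1) (ev0a x) hu1 hurec hB'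
      have hcf1 : ∀ m : ℕ, eval x (Rrel (2*m)).1 = GG (x 0) m := fun m => (hcf m).1
      have hcf2 : ∀ m : ℕ, eval x (Rrel (2*m+1)).1 = x 0 * GG (x 0) m := fun m => (hcf m).2
      obtain ⟨tj, rfl⟩ := hoj
      rcases Nat.even_or_odd (s+1) with hev | hod
      · obtain ⟨t, ht'⟩ := hev
        obtain ⟨m, hm⟩ : ∃ m, s + 1 = 2*m+2 := ⟨t - 1, by omega⟩
        obtain rfl : s = 2*m+1 := by omega
        have hG0 : GG (x 0) (m+1) = 0 := by
          refine (GG_eq_zero _ _).mpr ⟨2*tj+1, odd_two_mul_add_one tj, ?_, hA'⟩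
          refine abs_le.mpr ⟨?_, ?_⟩ <;> push_cast at hab1 hab2 ⊢ <;> omega
        refine ⟨?_, ?_, ?_⟩
        · rw [show (2*m+1+1 : ℕ) = 2*(m+1) by omega, hcf1 (m+1), hG0]
        · rw [hww, hB']
          have hpar : ((-1:ℂ))^(2*m+1+1) = 1 := by
            rw [show 2*m+1+1 = 2*(m+1) by ring, pow_mul]; simp
          rw [hpar]
          norm_num
        · rw [ev3, hx2, zero_mul]
      · obtain ⟨m, hm⟩ := hod
        obtain rfl : s = 2*m := by omega
        have hG0 : GG (x 0) m = 0 := by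
          refine (GG_eq_zero _ _).mpr ⟨2*tj+1, odd_two_mul_add_one tj, ?_, hA'⟩
          refine abs_le.mpr ⟨?_, ?_⟩ <;> push_cast at hab1 hab2 ⊢ <;> omega
        refine ⟨?_, ?_, ?_⟩
        · rw [hcf2 m, hG0, mul_zero]
        · rw [hww, hB']
          have hpar : ((-1:ℂ))^(2*m+1) = -1 := by
            rw [pow_succ, pow_mul]; simp
          rw [hpar, hcf1 m, hG0, mul_zero]
        · rw [ev3, hx2, zero_mul]
    · -- even j : b = 8
      have hje : Even j := Int.not_odd_iff_even.mp hoj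
      have hB' : x 1 = 8 := by rw [hx1, hB, if_neg hoj]
      have hA' : x 0 = 4*(j:ℂ)*Complex.I := by rw [hx0, hA, if_neg hoj]
      have hcf := cf8 (x 0) (x 1) (fun r => eval x (Rrel r).1) hu1 hurec hB'
      have hcf1 : ∀ m : ℕ, eval x (Rrel (2*m+1)).1 = x 0 * FF (x 0) m := fun m => (hcf m).1
      have hcf2 : ∀ m : ℕ, eval x (Rrel (2*m+2)).1 = (x 0)^2 * FF (x 0) m := fun m => (hcf m).2
      obtain ⟨tj, rfl⟩ := hje
      rcases Nat.even_or_odd (s+1) with hev | hod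
      · obtain ⟨t, ht'⟩ := hev
        obtain ⟨m, hm⟩ : ∃ m, s + 1 = 2*m+2 := ⟨t - 1, by omega⟩
        obtain rfl : s = 2*m+1 := by omega
        have hF0 : x 0 * FF (x 0) m = 0 := by
          refine (aFF_eq_zero _ _).mpr ⟨tj+tj, ⟨tj, rfl⟩, ?_, hA'⟩
          refine abs_le.mpr ⟨?_, ?_⟩ <;> push_cast at hab1 hab2 ⊢ <;> omega
        refine ⟨?_, ?_, ?_⟩
        · rw [show (2*m+1+1 : ℕ) = 2*m+2 by omega, hcf2 m]
          linear_combination (x 0) * hF0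
        · rw [hww, hB']
          have hpar : ((-1:ℂ))^(2*m+1+1) = 1 := by
            rw [show 2*m+1+1 = 2*(m+1) by ring, pow_mul]; simp
          rw [hpar, hcf1 m, hF0, mul_zero]
        · rw [ev3, hx2, zero_mul]
      · obtain ⟨m, hm⟩ := hod
        obtain rfl : s = 2*m := by omega
        have hF0 : x 0 * FF (x 0) m = 0 := by
          refine (aFF_eq_zero _ _).mpr ⟨tj+tj, ⟨tj, rfl⟩, ?_, hA'⟩
          refine abs_le.mpr ⟨?_, ?_⟩ <;> push_cast at hab1 hab2 ⊢ <;> omega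
        refine ⟨?_, ?_, ?_⟩
        · rw [hcf1 m, hF0]
        · rw [hww, hB']
          have hpar : ((-1:ℂ))^(2*m+1) = -1 := by
            rw [pow_succ, pow_mul]; simp
          rw [hpar]
          norm_num
        · rw [ev3, hx2, zero_mul]
end
end

section
/- Assuming γ·J_{g−1} ⊆ J_g and that the monomials α^a·β^b·γ^c with a+b+c < g−1 map to a ℂ-basis of ℂ[α,β,γ]/J_{g−1}, the kernel of the multiplication-by-γ map on ℂ[α,β,γ]/J_g equals J_{g−1}/J_g; equivalently, multiplication by γ factors as the surjection ℂ[α,β,γ]/J_g → ℂ[α,β,γ]/J_{g−1} followed by an injective map ℂ[α,β,γ]/J_{g−1} → ℂ[α,β,γ]/J_g. -/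
open MvPolynomial

noncomputable section

/-!
Write `J_{k+1} = (A, B) + (γ A')` with `A = R_{k+1}^1`, `B = R_{k+1}^2`, `A' = R_k^1`; it suffices
that `γ` is a non-zero-divisor modulo `(A, B)`. Reducing modulo `γ` turns a relation
`u A + v B = γ x` into a syzygy between `Ā_{k+1}` and `(β ± 8) Ā_k`, where `Ā_r = R_r^1 mod γ` obeys
the three-term recurrence `Ā_{r+2} = α Ā_{r+1} + (r+1)² (β ± 8) Ā_r`. These two are coprime:
consecutive `Ā_r` are coprime by the recurrence, and no `β - c` divides `Ā_r`, since specialising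
`β ↦ c` makes `Ā_r` a monic polynomial of degree `r` in `α`. So the syzygy is a multiple of the
Koszul one, which lifts back to `x ∈ (A, B)`.
-/

theorem MvPolynomial.X_dvd_sub_aeval_update_zero {R σ : Type*} [CommRing R] [DecidableEq σ]
    (i : σ) (p : MvPolynomial σ R) :
    X i ∣ p - aeval (Function.update X i 0) p := by
  rw [← Ideal.mem_span_singleton, ← Ideal.Quotient.eq, ← Ideal.Quotient.mkₐ_eq_mk R,
    ← AlgHom.comp_apply]
  congr 1
  refine MvPolynomial.algHom_ext fun j => ?_
  rcases eq_or_ne j i with rfl | hj <;> simp [*]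

theorem MvPolynomial.prime_X_sub_C {R σ : Type*} [CommRing R] [IsDomain R] (i : σ) (c : R) :
    Prime (X i - C c : MvPolynomial σ R) := by
  classical
  let translate : MvPolynomial σ R ≃ₐ[R] MvPolynomial σ R :=
    AlgEquiv.ofAlgHom (aeval (Function.update X i (X i - C c)))
      (aeval (Function.update X i (X i + C c)))
      (algHom_ext fun j => by rcases eq_or_ne j i with rfl | hj <;> simp [*])
      (algHom_ext fun j => by rcases eq_or_ne j i with rfl | hj <;> simp [*])
  have : translate (X i) = X i - C c := by simp [translate]
  rw [← this, MulEquiv.prime_iff]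
  exact X_prime

theorem Polynomial.monic_and_natDegree_eq_of_recurrence {R : Type*} [CommRing R] [Nontrivial R]
    (p : ℕ → Polynomial R) (k : ℕ → R) (h0 : p 0 = 1) (h1 : p 1 = Polynomial.X)
    (h : ∀ r, p (r + 2) = Polynomial.X * p (r + 1) + Polynomial.C (k r) * p r) (r : ℕ) :
    (p r).Monic ∧ (p r).natDegree = r := by
  induction r using Nat.twoStepInduction with
  | zero => simp [h0]
  | one => simp [h1]
  | more r ih₀ ih₁ =>
    have hX : (Polynomial.X * p (r + 1)).Monic := Polynomial.monic_X.mul ih₁.1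
    have hXdeg : (Polynomial.X * p (r + 1)).natDegree = r + 2 := by
      rw [Polynomial.natDegree_X_mul ih₁.1.ne_zero, ih₁.2]
    have hlt : (Polynomial.C (k r) * p r).degree < (Polynomial.X * p (r + 1)).degree :=
      Polynomial.degree_lt_degree <| by
        have := Polynomial.natDegree_C_mul_le (k r) (p r)
        omega
    rw [h]
    exact ⟨hX.add_of_left hlt, by rw [Polynomial.natDegree_add_eq_left_of_degree_lt hlt, hXdeg]⟩

theorem Ideal.mem_span_pair_of_mul_mem {R : Type*} [CommRing R] [IsDomain R]
    [DecompositionMonoid R] (σ : R →+* R) {γ : R} (hγ : γ ≠ 0) (hσγ : σ γ = 0) (hσ : ∀ p, γ ∣ p - σ p) {A B : R}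
    (hAB : IsRelPrime (σ A) (σ B)) (hB : σ B ≠ 0) {x : R}
    (hx : γ * x ∈ Ideal.span {A, B}) : x ∈ Ideal.span {A, B} := by
  obtain ⟨a, b, hab⟩ := Ideal.mem_span_pair.mp hx
  have hσab : σ a * σ A + σ b * σ B = 0 := by
    simpa [hσγ] using congrArg σ hab
  -- a syzygy of the coprime pair `(σ A, σ B)` is a multiple `f • (σ B, -σ A)` of the Koszul one
  obtain ⟨f, hf⟩ : σ B ∣ σ a :=
    hAB.symm.dvd_of_dvd_mul_right ⟨-σ b, by linear_combination hσab⟩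
  have hb : σ b = -(f * σ A) := by
    have : σ B * (σ b + f * σ A) = 0 := by linear_combination hσab - σ A * hf
    linear_combination (mul_eq_zero.mp this).resolve_left hB
  obtain ⟨a', ha'⟩ := hσ a
  obtain ⟨b', hb'⟩ := hσ b
  obtain ⟨A', hA'⟩ := hσ A
  obtain ⟨B', hB'⟩ := hσ B
  refine Ideal.mem_span_pair.mpr ⟨a' - f * B', b' + f * A', mul_left_cancel₀ hγ ?_⟩
  linear_combination hab - A * ha' - B * hb' - A * hf - B * hb - f * B * hA' + f * A * hB'

def setGaZero : R3 →ₐ[ℂ] R3 := aeval (Function.update X 2 0)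

def Abar (r : ℕ) : R3 := setGaZero (Rrel r).1

@[simp] lemma setGaZero_al : setGaZero al = al := by simp [setGaZero, al]

@[simp] lemma setGaZero_be : setGaZero be = be := by simp [setGaZero, be]

@[simp] lemma setGaZero_ga : setGaZero ga = 0 := by simp [setGaZero, ga]

lemma ga_dvd_sub_setGaZero (p : R3) : ga ∣ p - setGaZero p :=
  X_dvd_sub_aeval_update_zero 2 p

lemma setGaZero_Rrel_thd (r : ℕ) : setGaZero (Rrel r).2.2 = 0 := by
  cases r <;> simp [Rrel]

lemma setGaZero_Rrel_snd_succ (r : ℕ) :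
    setGaZero (Rrel (r + 1)).2.1 = (be + (-1) ^ (r + 1) * 8) * Abar r := by
  simp [Rrel, Abar, setGaZero_Rrel_thd, map_ofNat]

lemma Abar_zero : Abar 0 = 1 := by simp [Abar, Rrel]

lemma Abar_one : Abar 1 = al := by simp [Abar, Rrel]

lemma Abar_add_two (r : ℕ) : Abar (r + 2) =
    al * Abar (r + 1) + ((r + 1 : ℕ) : R3) ^ 2 * ((be + (-1) ^ (r + 1) * 8) * Abar r) := by
  rw [← setGaZero_Rrel_snd_succ]
  simp [Abar, Rrel]

def specBe (c : ℂ) : R3 →ₐ[ℂ] Polynomial ℂ := aeval ![Polynomial.X, Polynomial.C c, 0]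

lemma monic_specBe_Abar (c : ℂ) (r : ℕ) : (specBe c (Abar r)).Monic := by
  refine (Polynomial.monic_and_natDegree_eq_of_recurrence (fun r => specBe c (Abar r))
    (fun r => ((r + 1 : ℕ) : ℂ) ^ 2 * (c + (-1) ^ (r + 1) * 8)) ?_ ?_ ?_ r).1
  · simp [Abar_zero]
  · simp [Abar_one, specBe, al]
  · intro r
    simp only [specBe, Abar_add_two, al, be, map_add, map_mul, map_pow, map_natCast, map_neg,
      map_one, map_ofNat, aeval_X, Matrix.cons_val_zero, Matrix.cons_val_one]
    ring

lemma be_sub_C_not_dvd_Abar (c : ℂ) (r : ℕ) : ¬ be - C c ∣ Abar r := by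
  rintro ⟨q, hq⟩
  exact (monic_specBe_Abar c r).ne_zero (by simp [hq, specBe, be])

lemma isRelPrime_be_sub_C_Abar (c : ℂ) (r : ℕ) : IsRelPrime (be - C c) (Abar r) :=
  (prime_X_sub_C 1 c).irreducible.isRelPrime_iff_not_dvd.mpr (be_sub_C_not_dvd_Abar c r)

lemma be_add_neg_one_pow_mul_eight (n : ℕ) :
    (be + (-1) ^ n * 8 : R3) = be - C (-((-1) ^ n * 8)) := by
  simp [map_ofNat, sub_eq_add_neg]

lemma isRelPrime_Abar_succ (r : ℕ) : IsRelPrime (Abar (r + 1)) (Abar r) := by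
  induction r with
  | zero => rw [Abar_zero]; exact isRelPrime_one_right
  | succ r ih =>
    rw [Abar_add_two]
    refine IsRelPrime.mul_add_right_left (.mul_left ?_ (.mul_left ?_ ih.symm)) al
    · refine IsUnit.isRelPrime_left (IsUnit.pow 2 ?_)
      rw [← map_natCast C]
      exact (isUnit_iff_ne_zero.mpr (Nat.cast_ne_zero (R := ℂ).mpr r.succ_ne_zero)).map C
    · rw [be_add_neg_one_pow_mul_eight]
      exact isRelPrime_be_sub_C_Abar _ _

lemma Abar_ne_zero (r : ℕ) : Abar r ≠ 0 := fun h =>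
  (monic_specBe_Abar 0 r).ne_zero (by rw [h, map_zero])

lemma isRelPrime_setGaZero_Rrel_succ (k : ℕ) :
    IsRelPrime (setGaZero (Rrel (k + 1)).1) (setGaZero (Rrel (k + 1)).2.1) := by
  rw [setGaZero_Rrel_snd_succ, be_add_neg_one_pow_mul_eight]
  exact .mul_right (isRelPrime_be_sub_C_Abar _ _).symm (isRelPrime_Abar_succ k)

lemma setGaZero_Rrel_snd_succ_ne_zero (k : ℕ) : setGaZero (Rrel (k + 1)).2.1 ≠ 0 := by
  rw [setGaZero_Rrel_snd_succ, be_add_neg_one_pow_mul_eight]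
  exact mul_ne_zero (prime_X_sub_C 1 _).ne_zero (Abar_ne_zero k)

lemma J_zero : J 0 = ⊤ :=
  (Ideal.eq_top_iff_one _).mpr (Ideal.subset_span (by simp [Rrel]))

lemma Rrel_fst_mem_J (k : ℕ) : (Rrel k).1 ∈ J k := Ideal.subset_span (by simp)

lemma J_succ_le (k : ℕ) : J (k + 1) ≤ J k := by
  have h1 := Rrel_fst_mem_J k
  have h2 : (Rrel k).2.1 ∈ J k := Ideal.subset_span (by simp)
  have h3 : (Rrel k).2.2 ∈ J k := Ideal.subset_span (by simp)
  simp only [J, Ideal.span_le, Set.insert_subset_iff, Set.singleton_subset_iff, SetLike.mem_coe]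
  exact ⟨add_mem (Ideal.mul_mem_left _ _ h1) (Ideal.mul_mem_left _ _ h2),
    add_mem (Ideal.mul_mem_left _ _ h1) (Ideal.mul_mem_left _ _ h3), Ideal.mul_mem_left _ _ h1⟩

lemma J_succ_eq (k : ℕ) : J (k + 1) =
    Ideal.span {(Rrel (k + 1)).1, (Rrel (k + 1)).2.1} ⊔ Ideal.span {ga * (Rrel k).1} := by
  rw [J, ← Ideal.span_union, Set.insert_union, Set.singleton_union]
  rfl

lemma mem_J_of_ga_mul_mem {k : ℕ} {x : R3} (h : ga * x ∈ J (k + 1)) : x ∈ J k := by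
  rw [J_succ_eq, Submodule.mem_sup] at h
  obtain ⟨y, hy, z, hz, hyz⟩ := h
  obtain ⟨w, rfl⟩ := Ideal.mem_span_singleton'.mp hz
  have hpair : x - w * (Rrel k).1 ∈ Ideal.span {(Rrel (k + 1)).1, (Rrel (k + 1)).2.1} := by
    refine Ideal.mem_span_pair_of_mul_mem setGaZero.toRingHom (γ := ga) (X_ne_zero 2) setGaZero_ga
      ga_dvd_sub_setGaZero (isRelPrime_setGaZero_Rrel_succ k)
      (setGaZero_Rrel_snd_succ_ne_zero k) ?_
    convert hy using 1
    linear_combination -hyz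
  have hspan : Ideal.span {(Rrel (k + 1)).1, (Rrel (k + 1)).2.1} ≤ J k :=
    (J_succ_eq k ▸ le_sup_left).trans (J_succ_le k)
  simpa using add_mem (hspan hpair) (Ideal.mul_mem_left (J k) w (Rrel_fst_mem_J k))

theorem stmt18_general (g : ℕ)
    (hsub : ∀ x ∈ J (g - 1), ga * x ∈ J g) :
    ∀ x : R3, ga * x ∈ J g ↔ x ∈ J (g - 1) := by
  intro x
  refine ⟨fun h => ?_, hsub x⟩
  cases g with
  | zero => simp [J_zero]
  | succ k => exact mem_J_of_ga_mul_mem h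

theorem stmt18 (g : ℕ) (hg : 2 ≤ g)
    (hsub : ∀ x ∈ J (g - 1), ga * x ∈ J g)
    (hJ : J g ≤ J (g - 1))
    (hli : LinearIndependent ℂ
      (fun m : {m : ℕ × ℕ × ℕ // m.1 + m.2.1 + m.2.2 < g - 1} =>
        Ideal.Quotient.mk (J (g - 1)) (al ^ m.val.1 * be ^ m.val.2.1 * ga ^ m.val.2.2)))
    (hspan : Submodule.span ℂ (Set.range
      (fun m : {m : ℕ × ℕ × ℕ // m.1 + m.2.1 + m.2.2 < g - 1} =>
        Ideal.Quotient.mk (J (g - 1)) (al ^ m.val.1 * be ^ m.val.2.1 * ga ^ m.val.2.2))) = ⊤) :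
    ∀ x : R3, ga * x ∈ J g ↔ x ∈ J (g - 1) :=
  stmt18_general g hsub

end
end
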